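/- Let $\mathcal{G} = (V, E)$ be a finite connected graph with vertex set $V = \{v_1, \dots, v_n\}$ carrying a linear order. Call a subset $S \subseteq V$ a UDS set if for every $j \in S$ and every $i \in V$ with $i < j$ and $\{i, j\} \in E$, one has $i \in S$. Then there exist real numbers $x_1, \dots, x_n$ assigned to the vertices such that (1) $\sum_{i=1}^n x_i = 0$, and (2) for every proper nonempty UDS subset $S \subsetneq V$, $\sum_{v_i \in S} x_i > 0$. -/

import Mathlib

/-!
Orient every edge from its smaller to its larger endpoint and let `x i` be the out-degree minus
the in-degree of `i`. Each edge contributes `+1` and `-1`, so the total is zero. Summing over `S`,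
edges inside `S` cancel, so the sum counts edges leaving `S` minus edges entering it. For a UDS
set no edge enters `S` from a smaller vertex outside it, and by connectedness some edge leaves a
proper nonempty `S`, so the sum is positive.
-/

open Finset

section NetFlow

variable {α M : Type*} [AddCommGroup M] (w : α → α → M)

theorem Finset.sum_sum_sub_swap_eq_zero (S : Finset α) :
    ∑ i ∈ S, ∑ j ∈ S, (w i j - w j i) = 0 := by
  simp only [sum_sub_distrib]
  rw [sub_eq_zero, sum_comm]

theorem Finset.sum_sum_sub_swap_eq_sum_sum_compl [Fintype α] [DecidableEq α] (S : Finset α) :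
    ∑ i ∈ S, ∑ j, (w i j - w j i) = ∑ i ∈ S, ∑ j ∈ Sᶜ, (w i j - w j i) := by
  simp only [← sum_add_sum_compl S (fun j => w _ j - w j _), sum_add_distrib,
    sum_sum_sub_swap_eq_zero, zero_add]

end NetFlow

theorem SimpleGraph.Connected.exists_adj_mem_notMem {V : Type*} [Fintype V] {G : SimpleGraph V}
    (hconn : G.Connected) {S : Finset V} (hne : S.Nonempty) (hS : S ≠ univ) :
    ∃ u ∈ S, ∃ v ∉ S, G.Adj u v := by
  obtain ⟨s, hs⟩ := hne
  obtain ⟨t, ht⟩ := not_forall.1 (mt eq_univ_iff_forall.2 hS)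
  obtain ⟨d, -, hd₁, hd₂⟩ := ((hconn.preconnected s t).some).exists_boundary_dart (S : Set V) hs ht
  exact ⟨d.fst, hd₁, d.snd, hd₂, d.adj⟩

/-- Graph lemma: for a finite connected graph on the ordered vertex set `Fin n`,
one can assign reals `x i` to the vertices with total sum zero such that every
proper nonempty UDS subset has positive sum.  A subset `S` is UDS if for every
`j ∈ S` and every `i < j` adjacent to `j`, also `i ∈ S`. -/
theorem stmt_2 (n : ℕ) (G : SimpleGraph (Fin n)) (hconn : G.Connected) :
    ∃ x : Fin n → ℝ,
      (∑ i, x i = 0) ∧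
      ∀ S : Finset (Fin n), S.Nonempty → S ≠ Finset.univ →
        (∀ j ∈ S, ∀ i : Fin n, i < j → G.Adj i j → i ∈ S) →
        0 < ∑ i ∈ S, x i := by
  classical
  let w : Fin n → Fin n → ℝ := fun i j => if i < j ∧ G.Adj i j then 1 else 0
  have hw_nonneg : ∀ i j, 0 ≤ w i j := fun i j => by positivity
  refine ⟨fun i => ∑ j, (w i j - w j i), sum_sum_sub_swap_eq_zero w univ, ?_⟩
  intro S hne hS hUDS
  have hno_entering : ∀ i ∈ S, ∀ j ∈ Sᶜ, w j i = 0 := fun i hi j hj =>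
    if_neg fun h => mem_compl.1 hj (hUDS i hi j h.1 h.2)
  obtain ⟨u, hu, v, hv, huv⟩ := hconn.exists_adj_mem_notMem hne hS
  have hlt : u < v := huv.ne.lt_or_gt.resolve_right fun h => hv (hUDS u hu v h huv.symm)
  rw [sum_sum_sub_swap_eq_sum_sum_compl]
  calc (0 : ℝ) < w u v := by simp [w, hlt, huv]
    _ ≤ ∑ j ∈ Sᶜ, w u j := single_le_sum (fun j _ => hw_nonneg u j) (mem_compl.2 hv)
    _ ≤ ∑ i ∈ S, ∑ j ∈ Sᶜ, w i j :=
      single_le_sum (f := fun i => ∑ j ∈ Sᶜ, w i j)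
        (fun i _ => sum_nonneg fun j _ => hw_nonneg i j) hu
    _ = ∑ i ∈ S, ∑ j ∈ Sᶜ, (w i j - w j i) :=
      sum_congr rfl fun i hi => sum_congr rfl fun j hj => by rw [hno_entering i hi j hj, sub_zero]
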